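/- Let $\mu$ be an absolutely continuous probability measure on a rectangle $\mathcal{R} = [0,\pi] \times [0,2\pi]$ (with respect to Lebesgue measure), and let $\xi_1,\dots,\xi_K$ be drawn i.i.d. from $\mu$. Let $\mathcal{M} = \{(r_1,s_1),\dots,(r_N,s_N)\}$ be a set of distinct integer pairs with $N \geq K$, $r_q \geq 0$. Define the $K \times N$ matrix $G$ with entries $g_{pq} = (\cos\theta_p)^{r_q}(\sin\theta_p)^{|s_q|} e^{i\phi_p s_q}$ where $\xi_p = (\theta_p, \phi_p)$. Then with probability one, $G$ has full row rank $K$. -/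

import Mathlib

/-!
The rows of `G` are independent samples of the random vector `trigMonomials r s ξ ∈ ℂ^N`. If a
random vector falls into each fixed proper subspace with probability zero, then `k ≤ N`
independent copies of it are almost surely linearly independent: by Fubini, given linearly
independent first `k - 1` rows, the last row avoids their span almost surely.

A proper subspace lies in the kernel of a nonzero functional `b`, so it remains to see that the
generalized trigonometric polynomial `b ⬝ᵥ trigMonomials r s` has a Lebesgue-null zero set. Pick
`q₀` with `b q₀ ≠ 0`. The coefficient of `e^{i s q₀ φ}` is `sin^{|s q₀|} θ` times a nonzero
polynomial in `cos θ`, so it vanishes for only countably many `θ`; for every other `θ`, the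
`φ`-section is a nonzero Laurent polynomial in `e^{iφ}` and has countably many zeros. Fubini
again concludes.
-/

open MeasureTheory Real
open scoped Polynomial

section LinearIndependent

variable {α 𝕜 E : Type*} [MeasurableSpace α] [RCLike 𝕜] [NormedAddCommGroup E] [NormedSpace 𝕜 E]
  [FiniteDimensional 𝕜 E] [MeasurableSpace E] [BorelSpace E] {v : α → E}

theorem measurableSet_setOf_linearIndependent_comp (hv : Measurable v) (k : ℕ) :
    MeasurableSet {ξ : Fin k → α | LinearIndependent 𝕜 (v ∘ ξ)} := by
  have := FiniteDimensional.proper_rclike 𝕜 E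
  exact (isOpen_setOfPred_linearIndependent (𝕜 := 𝕜) (E := E)).measurableSet.preimage
    (measurable_pi_lambda _ fun p => hv.comp (measurable_pi_apply p))

theorem ae_pi_linearIndependent_comp {μ : Measure α} [SigmaFinite μ] (hv : Measurable v)
    (hμ : ∀ W : Submodule 𝕜 E, W ≠ ⊤ → μ {x | v x ∈ W} = 0) :
    ∀ k ≤ Module.finrank 𝕜 E,
      ∀ᵐ ξ ∂Measure.pi (fun _ : Fin k => μ), LinearIndependent 𝕜 (v ∘ ξ)
  | 0, _ => .of_forall fun _ => linearIndependent_empty_type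
  | k + 1, hk => by
    have htail := ae_pi_linearIndependent_comp hv hμ k (by omega)
    have hlast (η : Fin k → α) (hη : LinearIndependent 𝕜 (v ∘ η)) :
        ∀ᵐ x ∂μ, v x ∉ Submodule.span 𝕜 (Set.range (v ∘ η)) := by
      refine measure_eq_zero_iff_ae_notMem.mp (hμ (Submodule.span 𝕜 _) fun htop => ?_)
      have := finrank_span_eq_card hη
      rw [htop, finrank_top, Fintype.card_fin] at this
      omega
    let e := MeasurableEquiv.piFinSuccAbove (fun _ : Fin (k + 1) => α) (Fin.last k)
    have hprod : ∀ᵐ z ∂μ.prod (Measure.pi fun _ : Fin k => μ),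
        LinearIndependent 𝕜 (v ∘ e.symm z) := by
      have hmeas := e.symm.measurable
        (measurableSet_setOf_linearIndependent_comp (𝕜 := 𝕜) hv (k + 1))
      refine (Measure.ae_prod_iff_ae_ae hmeas).2 <| (Measure.ae_ae_comm
        (p := fun x η => LinearIndependent 𝕜 (v ∘ e.symm (x, η))) hmeas).2 ?_
      filter_upwards [htail] with η hη
      filter_upwards [hlast η hη] with x hx
      rw [show e.symm (x, η) = Fin.snoc η x from Fin.insertNth_last' x η, Fin.comp_snoc,
        linearIndependent_finSnoc]
      exact ⟨hη, hx⟩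
    have hmp := measurePreserving_piFinSuccAbove (fun _ => μ) (Fin.last k)
    filter_upwards [hmp.quasiMeasurePreserving.ae hprod] with ξ hξ
    rwa [e.symm_apply_apply] at hξ

end LinearIndependent

theorem countable_setOf_sum_mul_pow_eq_zero {X ι K : Type*} [CommRing K] [IsDomain K]
    {f : X → K} (hf : ∀ w, {x | f x = w}.Countable) (S : Finset ι) (a : ι → K) (m : ι → ℕ)
    {d : ℕ} (hd : ∑ i ∈ S with m i = d, a i ≠ 0) :
    {x | ∑ i ∈ S, a i * f x ^ m i = 0}.Countable := by
  set P : K[X] := ∑ i ∈ S, Polynomial.C (a i) * Polynomial.X ^ m i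
  have hP : P ≠ 0 := by
    refine fun h => hd ?_
    have := congrArg (Polynomial.coeff · d) h
    simpa [P, Polynomial.finsetSum_coeff, Polynomial.coeff_X_pow, Finset.sum_filter, eq_comm]
      using this
  refine ((Polynomial.finite_setOfPred_isRoot hP).countable.biUnion fun w _ => hf w).mono
    fun x hx => Set.mem_biUnion (x := f x) ?_ rfl
  simpa [P, Polynomial.eval_finsetSum] using hx

theorem Real.countable_setOf_cos_eq (w : ℝ) : {θ : ℝ | cos θ = w}.Countable := by
  rcases Set.eq_empty_or_nonempty {θ : ℝ | cos θ = w} with h | ⟨θ₀, hθ₀⟩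
  · exact h ▸ Set.countable_empty
  refine (Set.countable_range fun p : ℤ × Bool =>
    if p.2 then 2 * p.1 * π + θ₀ else 2 * p.1 * π - θ₀).mono fun θ hθ => ?_
  obtain ⟨k, hk | hk⟩ := cos_eq_cos_iff.mp (hθ₀.trans hθ.symm)
  · exact ⟨(k, true), by simp [hk]⟩
  · exact ⟨(k, false), by simp [hk]⟩

theorem Real.countable_setOf_sin_eq_zero : {θ : ℝ | sin θ = 0}.Countable :=
  (Set.countable_range fun n : ℤ => (n : ℝ) * π).mono fun _ hθ => sin_eq_zero_iff.mp hθ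

theorem Complex.countable_setOf_exp_I_mul_eq (w : ℂ) :
    {φ : ℝ | exp (I * φ) = w}.Countable := by
  rcases Set.eq_empty_or_nonempty {φ : ℝ | exp (I * φ) = w} with h | ⟨φ₀, hφ₀⟩
  · exact h ▸ Set.countable_empty
  refine (Set.countable_range fun n : ℤ => φ₀ + n * (2 * π)).mono fun φ hφ => ?_
  obtain ⟨n, hn⟩ := exp_eq_exp_iff_exists_int.mp (hφ.trans hφ₀.symm)
  refine ⟨n, ofReal_injective (mul_left_cancel₀ I_ne_zero ?_)⟩
  push_cast
  rw [hn]
  ring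

theorem Complex.countable_setOf_sum_mul_exp_eq_zero {ι : Type*} (S : Finset ι) (a : ι → ℂ)
    (n : ι → ℤ) {d : ℤ} (hd : ∑ i ∈ S with n i = d, a i ≠ 0) :
    {φ : ℝ | ∑ i ∈ S, a i * exp (I * n i * φ) = 0}.Countable := by
  -- shifting all frequencies by `M` turns the sum into a polynomial in `exp (I φ)`
  set M : ℤ := |d| + ∑ i ∈ S, |n i|
  have hM : ∀ i ∈ S, 0 ≤ n i + M := fun i hi => by
    have := Finset.single_le_sum (fun j _ => abs_nonneg (n j)) hi
    have := neg_abs_le (n i)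
    have := abs_nonneg d
    omega
  have hdM : 0 ≤ d + M := by
    have := Finset.sum_nonneg fun i (_ : i ∈ S) => abs_nonneg (n i)
    have := neg_abs_le d
    omega
  have hshift (φ : ℝ) : ∑ i ∈ S, a i * exp (I * φ) ^ (n i + M).toNat =
      exp (I * M * φ) * ∑ i ∈ S, a i * exp (I * n i * φ) := by
    rw [Finset.mul_sum]
    refine Finset.sum_congr rfl fun i hi => ?_
    have hk : ((n i + M).toNat : ℂ) = n i + M := by exact_mod_cast Int.toNat_of_nonneg (hM i hi)
    rw [← exp_nat_mul, hk, mul_left_comm (exp _), ← exp_add]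
    congr 2
    ring
  have hcoeff : ∑ i ∈ S with (n i + M).toNat = (d + M).toNat, a i ≠ 0 := by
    rwa [Finset.filter_congr (q := fun i => n i = d) fun i hi => by have := hM i hi; omega]
  refine (countable_setOf_sum_mul_pow_eq_zero countable_setOf_exp_I_mul_eq S a _ hcoeff).mono
    fun φ (hφ : _ = 0) => ?_
  show _ = 0
  rw [hshift, hφ, mul_zero]

noncomputable def trigMonomials {ι : Type*} (r : ι → ℕ) (s : ι → ℤ) (x : ℝ × ℝ) : ι → ℂ :=
  fun q => (cos x.1 : ℂ) ^ r q * (sin x.1 : ℂ) ^ (s q).natAbs *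
    Complex.exp (Complex.I * s q * x.2)

theorem continuous_trigMonomials {ι : Type*} (r : ι → ℕ) (s : ι → ℤ) :
    Continuous (trigMonomials r s) := by
  unfold trigMonomials
  fun_prop

section trigMonomials

variable {ι : Type*} [Fintype ι] {r : ι → ℕ} {s : ι → ℤ}

/-- `b ⬝ᵥ trigMonomials r s (θ, φ) = ∑ d, trigCoeff r s b d θ * exp (I d φ)`. -/
noncomputable def trigCoeff (r : ι → ℕ) (s : ι → ℤ) (b : ι → ℂ) (d : ℤ) (θ : ℝ) : ℂ :=
  ∑ q with s q = d, b q * (cos θ : ℂ) ^ r q * (sin θ : ℂ) ^ (s q).natAbs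

theorem countable_setOf_trigCoeff_eq_zero (hrs : Function.Injective fun q => (r q, s q))
    {b : ι → ℂ} {q₀ : ι} (hq₀ : b q₀ ≠ 0) : {θ | trigCoeff r s b (s q₀) θ = 0}.Countable := by
  have hcos : {θ : ℝ | ∑ q with s q = s q₀, b q * (cos θ : ℂ) ^ r q = 0}.Countable := by
    refine countable_setOf_sum_mul_pow_eq_zero (fun w => (countable_setOf_cos_eq w.re).mono
      fun θ (hθ : _ = w) => ?_) _ b r (d := r q₀) ?_
    · show cos θ = w.re
      rw [← hθ, Complex.ofReal_re]
    · rwa [Finset.filter_filter, Finset.sum_eq_single_of_mem q₀ (by simp)]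
      intro q hq hne
      simp only [Finset.mem_filter, Finset.mem_univ, true_and] at hq
      exact absurd (hrs (Prod.ext hq.2 hq.1)) hne
  refine (countable_setOf_sin_eq_zero.union hcos).mono fun θ (hθ : _ = 0) => ?_
  have : (sin θ : ℂ) ^ (s q₀).natAbs * ∑ q with s q = s q₀, b q * (cos θ : ℂ) ^ r q = 0 := by
    rw [← hθ, trigCoeff, Finset.mul_sum]
    refine Finset.sum_congr rfl fun q hq => ?_
    rw [(Finset.mem_filter.mp hq).2]
    ring
  rcases mul_eq_zero.mp this with h | h
  · exact Or.inl (by exact_mod_cast (pow_eq_zero_iff'.mp h).1)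
  · exact Or.inr h

theorem volume_setOf_dotProduct_trigMonomials_eq_zero
    (hrs : Function.Injective fun q => (r q, s q)) {b : ι → ℂ} (hb : b ≠ 0) :
    volume {x : ℝ × ℝ | b ⬝ᵥ trigMonomials r s x = 0} = 0 := by
  obtain ⟨q₀, hq₀⟩ := Function.ne_iff.mp hb
  have hmeas : MeasurableSet {x : ℝ × ℝ | b ⬝ᵥ trigMonomials r s x = 0} :=
    (continuous_const.dotProduct (continuous_trigMonomials r s)).measurable
      (measurableSet_singleton 0)
  rw [Measure.volume_eq_prod, Measure.measure_prod_null hmeas]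
  filter_upwards [measure_eq_zero_iff_ae_notMem.mp
    ((countable_setOf_trigCoeff_eq_zero hrs hq₀).measure_zero volume)] with θ hθ
  have hsection := Complex.countable_setOf_sum_mul_exp_eq_zero Finset.univ
    (fun q => b q * (cos θ : ℂ) ^ r q * (sin θ : ℂ) ^ (s q).natAbs) s hθ
  refine measure_mono_null (fun φ (hφ : _ = 0) => ?_) (hsection.measure_zero volume)
  rw [← hφ]
  simp only [Set.mem_ofPred_eq, dotProduct, trigMonomials, mul_assoc]

theorem volume_setOf_trigMonomials_mem_eq_zero (hrs : Function.Injective fun q => (r q, s q))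
    {W : Submodule ℂ (ι → ℂ)} (hW : W ≠ ⊤) : volume {x | trigMonomials r s x ∈ W} = 0 := by
  classical
  obtain ⟨f, hf, hWf⟩ := W.exists_le_ker_of_lt_top hW.lt_top
  set b := (dotProductEquiv ℂ ι).symm f
  have hb : b ≠ 0 := by simpa [b] using hf
  refine measure_mono_null (fun x (hx : _ ∈ W) => ?_)
    (volume_setOf_dotProduct_trigMonomials_eq_zero hrs hb)
  have hbf : dotProductEquiv ℂ ι b = f := (dotProductEquiv ℂ ι).apply_symm_apply f
  rw [Set.mem_ofPred_eq, ← dotProductEquiv_apply_apply, hbf]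
  exact hWf hx

end trigMonomials

theorem stmt_8_general (K N : ℕ) (hKN : K ≤ N)
    (r : Fin N → ℕ) (s : Fin N → ℤ)
    (hdist : Function.Injective (fun q => (r q, s q)))
    (μ : Measure (ℝ × ℝ)) [IsProbabilityMeasure μ] (hac : μ ≪ volume) :
    (Measure.pi fun _ : Fin K => μ)
      {ξ : Fin K → ℝ × ℝ |
        (Matrix.of fun (p : Fin K) (q : Fin N) =>
          (Real.cos (ξ p).1 : ℂ) ^ (r q) * (Real.sin (ξ p).1 : ℂ) ^ (s q).natAbs *
            Complex.exp (Complex.I * s q * (ξ p).2)).rank ≠ K}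
      = 0 := by
  have hLI := ae_pi_linearIndependent_comp (continuous_trigMonomials r s).measurable
    (fun W hW => hac (volume_setOf_trigMonomials_mem_eq_zero hdist hW)) K (by simpa using hKN)
  refine measure_mono_null ?_ (ae_iff.mp hLI)
  intro ξ hrank hξ
  exact hrank ((LinearIndependent.rank_matrix (M := Matrix.of fun p => trigMonomials r s (ξ p))
    hξ).trans (Fintype.card_fin K))

/-- Lemma 4 of the paper: with points `ξ₁,…,ξ_K` drawn i.i.d. from an
absolutely continuous probability measure on `[0,π] × [0,2π]`, the `K × N`
matrix of generalized trigonometric monomials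
`g_{pq} = (cos θ_p)^{r_q} (sin θ_p)^{|s_q|} e^{i φ_p s_q}` (with distinct
exponent pairs, `N ≥ K`) has full row rank `K` almost surely. -/
theorem stmt_8 (K N : ℕ) (hK : 1 ≤ K) (hKN : K ≤ N)
    (r : Fin N → ℕ) (s : Fin N → ℤ)
    (hdist : Function.Injective (fun q => (r q, s q)))
    (μ : Measure (ℝ × ℝ)) [IsProbabilityMeasure μ] (hac : μ ≪ volume)
    (hsupp : μ (Set.Icc 0 π ×ˢ Set.Icc 0 (2 * π))ᶜ = 0) :
    (Measure.pi fun _ : Fin K => μ)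
      {ξ : Fin K → ℝ × ℝ |
        (Matrix.of fun (p : Fin K) (q : Fin N) =>
          (Real.cos (ξ p).1 : ℂ) ^ (r q) * (Real.sin (ξ p).1 : ℂ) ^ (s q).natAbs *
            Complex.exp (Complex.I * s q * (ξ p).2)).rank ≠ K}
      = 0 :=
  stmt_8_general K N hKN r s hdist μ hac
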